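/- arXiv:1606.09155 — 2 statements merged into one kernel-verified Lean document; each statement's English description precedes it below -/
import Mathlib

section
/- (O(1/t) ergodic rate of linearized ALM with constant parameters.) Under the setting of the constant-parameter linearized ALM — β > 0, γ ∈ (0, 2β), P self-adjoint with P − L_f·I positive definite, λ¹ = 0, and for each k ≥ 1 there is a subgradient uᵏ of g at x^{k+1} with ∇f(xᵏ) + uᵏ − A*λᵏ + β A*(A x^{k+1} − b) + P(x^{k+1} − xᵏ) = 0 and λ^{k+1} = λᵏ − γ(A x^{k+1} − b) — let (x*, λ*) satisfy the KKT conditions with λ* ≠ 0, and for t ≥ 1 set x̃^{t+1} = (1/t)∑_{k=1}^t x^{k+1}. Then |F(x̃^{t+1}) − F(x*)| ≤ (1/t)·(½‖x¹ − x*‖²_P + 2‖λ*‖²/γ) and ‖A x̃^{t+1} − b‖ ≤ (1/(t‖λ*‖))·(½‖x¹ − x*‖²_P + 2‖λ*‖²/γ). -/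
/-!
Every iteration decreases the Lyapunov function `V_k(l) = γ ‖xᵏ - x*‖²_P + ‖λᵏ - l‖²` by at
least `2γ (F(xᵏ⁺¹) - F(x*) - ⟪l, A xᵏ⁺¹ - b⟫)`, for every test multiplier `l`: the descent lemma
for `f`, convexity of `f` and the subgradient inequality for `g` bound the objective gap by the
inner product of `∇f(xᵏ) + uᵏ` with `xᵏ⁺¹ - x*`, which the optimality condition of the `x`-step
rewrites through `P` and `λᵏ`; the multiplier update contributes `γ²‖A xᵏ⁺¹ - b‖²`, absorbed by
`γ ≤ 2β`, and `P - L_f I ⪰ 0` absorbs the curvature term. Telescoping from `λ¹ = 0` and Jensen's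
inequality give `2γ t (F(x̃) - F(x*) - ⟪l, A x̃ - b⟫) ≤ γ ‖x¹ - x*‖²_P + ‖l‖²`. Taking `l` of
norm `2‖λ*‖` pointing against the residual, and using the KKT bound
`F(x̃) - F(x*) ≥ ⟪λ*, A x̃ - b⟫ ≥ -‖λ*‖ ‖A x̃ - b‖`, yields both estimates.
-/

open scoped RealInnerProductSpace

def HasSubgradientAt {E : Type*} [NormedAddCommGroup E] [InnerProductSpace ℝ E]
    (g : E → ℝ) (u z : E) : Prop :=
  ∀ w, g w ≥ g z + ⟪u, w - z⟫

section SmoothConvex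

open AffineMap

variable {E : Type*} [NormedAddCommGroup E] [InnerProductSpace ℝ E] [CompleteSpace E]
  {f g : E → ℝ} {f' : E → E} {L : ℝ}

theorem HasGradientAt.hasDerivAt_comp_lineMap {v x y : E} {s : ℝ}
    (h : HasGradientAt f v (lineMap x y s)) :
    HasDerivAt (f ∘ lineMap (k := ℝ) x y) ⟪v, y - x⟫ s := by
  simpa using h.hasFDerivAt.comp_hasDerivAt s hasDerivAt_lineMap

theorem ConvexOn.add_inner_le_of_hasGradientAt {v x : E} (hf : ConvexOn ℝ Set.univ f)
    (hv : HasGradientAt f v x) (y : E) : f x + ⟪v, y - x⟫ ≤ f y := by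
  have hφ : ConvexOn ℝ Set.univ (f ∘ lineMap (k := ℝ) x y) := hf.comp_affineMap (lineMap x y)
  have hderiv : HasDerivAt (f ∘ lineMap (k := ℝ) x y) ⟪v, y - x⟫ 0 :=
    HasGradientAt.hasDerivAt_comp_lineMap (by rwa [lineMap_apply_zero])
  have := hφ.le_slope_of_hasDerivAt (Set.mem_univ 0) (Set.mem_univ 1) zero_lt_one hderiv
  simp only [slope_def_field, Function.comp_apply, lineMap_apply_one, lineMap_apply_zero, sub_zero,
    div_one] at this
  linarith

theorem le_add_inner_add_sq_of_lipschitz_gradient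
    (hgrad : ∀ z, HasGradientAt f (f' z) z) (hlip : ∀ z w, ‖f' z - f' w‖ ≤ L * ‖z - w‖)
    (x y : E) : f y ≤ f x + ⟪f' x, y - x⟫ + L / 2 * ‖y - x‖ ^ 2 := by
  set ψ : ℝ → ℝ := fun s ↦
    f (lineMap x y s) - s * ⟪f' x, y - x⟫ - L / 2 * s ^ 2 * ‖y - x‖ ^ 2
  have hψ' (s : ℝ) : HasDerivAt ψ
      (⟪f' (lineMap x y s), y - x⟫ - ⟪f' x, y - x⟫ - L * s * ‖y - x‖ ^ 2) s := by
    have := (((hgrad (lineMap x y s)).hasDerivAt_comp_lineMap).sub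
      ((hasDerivAt_id s).mul_const ⟪f' x, y - x⟫)).sub
      (((hasDerivAt_pow 2 s).const_mul (L / 2)).mul_const (‖y - x‖ ^ 2))
    exact this.congr_deriv (by push_cast; ring)
  have hanti : AntitoneOn ψ (Set.Ici 0) := by
    refine antitoneOn_of_hasDerivWithinAt_nonpos (convex_Ici 0)
      (fun s _ ↦ (hψ' s).continuousAt.continuousWithinAt) (fun s _ ↦ (hψ' s).hasDerivWithinAt) ?_
    intro s hs
    rw [interior_Ici, Set.mem_Ioi] at hs
    have hdist : ‖f' (lineMap x y s) - f' x‖ ≤ L * (s * ‖y - x‖) := by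
      simpa [lineMap_apply_module', norm_smul, abs_of_pos hs] using hlip (lineMap x y s) x
    have := (real_inner_le_norm (f' (lineMap x y s) - f' x) (y - x)).trans
      (mul_le_mul_of_nonneg_right hdist (norm_nonneg _))
    rw [inner_sub_left] at this
    linarith
  have := hanti Set.self_mem_Ici (Set.mem_Ici.2 zero_le_one) zero_le_one
  simp only [ψ, lineMap_apply_one, lineMap_apply_zero, one_mul, one_pow, mul_one, zero_mul,
    sub_zero, ne_eq, OfNat.ofNat_ne_zero, not_false_eq_true, zero_pow, mul_zero] at this
  linarith

theorem add_sub_add_le_inner_of_hasSubgradientAt (hf : ConvexOn ℝ Set.univ f)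
    (hgrad : ∀ z, HasGradientAt f (f' z) z) (hlip : ∀ z w, ‖f' z - f' w‖ ≤ L * ‖z - w‖)
    {u y z : E} (hu : HasSubgradientAt g u z) (s : E) :
    f z + g z - (f s + g s) ≤ ⟪f' y + u, z - s⟫ + L / 2 * ‖z - y‖ ^ 2 := by
  have hdescent := le_add_inner_add_sq_of_lipschitz_gradient hgrad hlip y z
  have hconv := hf.add_inner_le_of_hasGradientAt (hgrad y) s
  have hsub := hu s
  have hsplit : ⟪f' y + u, z - s⟫ = ⟪f' y, z - y⟫ - ⟪f' y, s - y⟫ - ⟪u, s - z⟫ := by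
    simp only [inner_add_left, inner_sub_right]
    ring
  linarith

end SmoothConvex

theorem LinearMap.IsSymmetric.two_mul_inner_sub_eq {E : Type*} [NormedAddCommGroup E]
    [InnerProductSpace ℝ E] {T : E →ₗ[ℝ] E} (hT : T.IsSymmetric) (p q : E) :
    2 * ⟪T (p - q), p⟫ = ⟪p, T p⟫ - ⟪q, T q⟫ + ⟪p - q, T (p - q)⟫ := by
  have hqp : ⟪p, T q⟫ = ⟪q, T p⟫ := by rw [← hT, real_inner_comm]
  simp only [map_sub, inner_sub_left, inner_sub_right, hT p, hT q, hqp]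
  ring

theorem ConvexOn.card_mul_map_average_le {E ι : Type*} [AddCommGroup E] [Module ℝ E]
    {φ : E → ℝ} (hφ : ConvexOn ℝ Set.univ φ) {s : Finset ι} (hs : s.Nonempty) (p : ι → E) :
    (s.card : ℝ) * φ ((s.card : ℝ)⁻¹ • ∑ i ∈ s, p i) ≤ ∑ i ∈ s, φ (p i) := by
  have hcard : (0 : ℝ) < s.card := by exact_mod_cast hs.card_pos
  have hw : ∑ _i ∈ s, (s.card : ℝ)⁻¹ = 1 := by
    rw [Finset.sum_const, nsmul_eq_mul, mul_inv_cancel₀ hcard.ne']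
  have := hφ.map_sum_le (p := p) (fun _ _ ↦ inv_nonneg.2 hcard.le) hw (fun _ _ ↦ Set.mem_univ _)
  rw [← Finset.smul_sum, ← Finset.smul_sum, smul_eq_mul] at this
  calc (s.card : ℝ) * φ ((s.card : ℝ)⁻¹ • ∑ i ∈ s, p i)
      ≤ s.card * ((s.card : ℝ)⁻¹ * ∑ i ∈ s, φ (p i)) := by gcongr
    _ = ∑ i ∈ s, φ (p i) := by field_simp

theorem exists_norm_le_inner_eq_neg_mul_norm {H : Type*} [NormedAddCommGroup H]
    [InnerProductSpace ℝ H] {c : ℝ} (hc : 0 ≤ c) (r : H) :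
    ∃ l : H, ‖l‖ ≤ c ∧ ⟪l, r⟫ = -(c * ‖r‖) := by
  refine ⟨-(c / ‖r‖) • r, ?_, ?_⟩
  · rw [norm_smul, norm_neg, Real.norm_of_nonneg (by positivity)]
    rcases eq_or_ne ‖r‖ 0 with hr | hr
    · simp [hr, hc]
    · rw [div_mul_cancel₀ c hr]
  · rw [real_inner_smul_left, real_inner_self_eq_norm_sq]
    rcases eq_or_ne ‖r‖ 0 with hr | hr
    · simp [hr]
    · field_simp

theorem abs_le_and_le_of_gap_bounds {D ρ s t C : ℝ} (hρ : 0 ≤ ρ) (hs : 0 < s) (ht : 0 < t)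
    (hlow : -(s * ρ) ≤ D) (hup : t * (D + 2 * s * ρ) ≤ C) :
    |D| ≤ 1 / t * C ∧ ρ ≤ 1 / (t * s) * C := by
  have htsρ : t * (s * ρ) ≤ C := by nlinarith
  have htD : t * D ≤ C := by nlinarith [mul_nonneg (mul_nonneg ht.le hs.le) hρ]
  have htD' : -C ≤ t * D := by nlinarith
  rw [one_div_mul_eq_div, one_div_mul_eq_div, abs_le, neg_le, le_div_iff₀ ht, le_div_iff₀ ht,
    le_div_iff₀ (by positivity)]
  exact ⟨⟨by linarith, by linarith⟩, by linarith⟩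

section LinearizedALM

variable {E H : Type*} [NormedAddCommGroup E] [InnerProductSpace ℝ E] [CompleteSpace E]
  [NormedAddCommGroup H] [InnerProductSpace ℝ H] [CompleteSpace H]
  {A : E →L[ℝ] H} {b : H} {f g : E → ℝ} {f' : E → E} {Lf β γ : ℝ} {P : E →L[ℝ] E}

def almLyapunov (γ : ℝ) (P : E →L[ℝ] E) (xs : E) (l : H) (x : E) (m : H) : ℝ :=
  γ * ⟪x - xs, P (x - xs)⟫ + ‖m - l‖ ^ 2

theorem two_mul_lagrangian_gap_le_almLyapunov_sub (hf : ConvexOn ℝ Set.univ f)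
    (hgrad : ∀ z, HasGradientAt f (f' z) z) (hlip : ∀ z w, ‖f' z - f' w‖ ≤ Lf * ‖z - w‖)
    (hγ : 0 ≤ γ) (hγβ : γ ≤ 2 * β) (hP : IsSelfAdjoint P)
    (hPLf : ∀ v, Lf * ‖v‖ ^ 2 ≤ ⟪v, P v⟫) {x x' xs u : E} {m m' : H}
    (hu : HasSubgradientAt g u x')
    (hopt : f' x + u - A.adjoint m + β • A.adjoint (A x' - b) + P (x' - x) = 0)
    (hm : m' = m - γ • (A x' - b)) (hfeas : A xs = b) (l : H) :
    2 * γ * (f x' + g x' - (f xs + g xs) - ⟪l, A x' - b⟫)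
      ≤ almLyapunov γ P xs l x m - almLyapunov γ P xs l x' m' := by
  set r := A x' - b
  have hgap := add_sub_add_le_inner_of_hasSubgradientAt hf hgrad hlip hu (y := x) xs
  have hinner : ⟪f' x + u, x' - xs⟫ = ⟪m, r⟫ - β * ‖r‖ ^ 2 - ⟪P (x' - x), x' - xs⟫ := by
    have hstep : f' x + u = A.adjoint m - β • A.adjoint r - P (x' - x) := by
      rw [← sub_eq_zero, ← hopt]; abel
    rw [hstep, inner_sub_left, inner_sub_left, real_inner_smul_left,
      ContinuousLinearMap.adjoint_inner_left, ContinuousLinearMap.adjoint_inner_left, map_sub,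
      hfeas, real_inner_self_eq_norm_sq]
  have hP3 := hP.isSymmetric.two_mul_inner_sub_eq (x' - xs) (x - xs)
  rw [sub_sub_sub_cancel_right, ContinuousLinearMap.coe_coe] at hP3
  have hmult : ‖m' - l‖ ^ 2 = ‖m - l‖ ^ 2 - 2 * γ * ⟪m - l, r⟫ + γ ^ 2 * ‖r‖ ^ 2 := by
    rw [hm, sub_right_comm, norm_sub_sq_real, real_inner_smul_right, norm_smul,
      Real.norm_of_nonneg hγ]
    ring
  have hml : ⟪m - l, r⟫ = ⟪m, r⟫ - ⟪l, r⟫ := inner_sub_left _ _ _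
  have hbound : f x' + g x' - (f xs + g xs) - ⟪l, r⟫
      ≤ ⟪m - l, r⟫ - β * ‖r‖ ^ 2 - ⟪P (x' - x), x' - xs⟫ + Lf / 2 * ‖x' - x‖ ^ 2 := by
    linarith
  unfold almLyapunov
  linarith [mul_le_mul_of_nonneg_left hbound (by positivity : (0 : ℝ) ≤ 2 * γ),
    mul_le_mul_of_nonneg_left (hPLf (x' - x)) hγ, congrArg (γ * ·) hP3,
    mul_nonneg (mul_nonneg hγ (sub_nonneg.2 hγβ)) (sq_nonneg ‖r‖)]

theorem two_mul_ergodic_lagrangian_gap_le (hf : ConvexOn ℝ Set.univ f)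
    (hgrad : ∀ z, HasGradientAt f (f' z) z) (hlip : ∀ z w, ‖f' z - f' w‖ ≤ Lf * ‖z - w‖)
    (hg : ConvexOn ℝ Set.univ g) (hLf : 0 ≤ Lf) (hγ : 0 ≤ γ) (hγβ : γ ≤ 2 * β)
    (hP : IsSelfAdjoint P) (hPLf : ∀ v, Lf * ‖v‖ ^ 2 ≤ ⟪v, P v⟫) {x : ℕ → E} {lam : ℕ → H}
    (hlam1 : lam 1 = 0)
    (hopt : ∀ k, 1 ≤ k → ∃ u, HasSubgradientAt g u (x (k + 1)) ∧
      f' (x k) + u - A.adjoint (lam k) + β • A.adjoint (A (x (k + 1)) - b)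
        + P (x (k + 1) - x k) = 0)
    (hlam : ∀ k, 1 ≤ k → lam (k + 1) = lam k - γ • (A (x (k + 1)) - b))
    {xs : E} (hfeas : A xs = b) {t : ℕ} (ht : 1 ≤ t) {xt : E}
    (hxt : xt = (t : ℝ)⁻¹ • ∑ k ∈ Finset.Icc 1 t, x (k + 1)) (l : H) :
    2 * γ * (t * (f xt + g xt - (f xs + g xs) - ⟪l, A xt - b⟫))
      ≤ γ * ⟪x 1 - xs, P (x 1 - xs)⟫ + ‖l‖ ^ 2 := by
  set V : ℕ → ℝ := fun k ↦ almLyapunov γ P xs l (x k) (lam k)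
  have hcard : (Finset.Icc 1 t).card = t := by simp
  have hsum : ∑ k ∈ Finset.Icc 1 t,
      2 * γ * (f (x (k + 1)) + g (x (k + 1)) - (f xs + g xs) - ⟪l, A (x (k + 1)) - b⟫)
      ≤ V 1 - V (t + 1) := by
    calc _ ≤ ∑ k ∈ Finset.Icc 1 t, (V k - V (k + 1)) := by
          refine Finset.sum_le_sum fun k hk ↦ ?_
          obtain ⟨u, hu, hopt_k⟩ := hopt k (Finset.mem_Icc.1 hk).1
          exact two_mul_lagrangian_gap_le_almLyapunov_sub hf hgrad hlip hγ hγβ hP hPLf hu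
            hopt_k (hlam k (Finset.mem_Icc.1 hk).1) hfeas l
      _ = V 1 - V (t + 1) := by
          rw [← neg_sub, ← Finset.sum_Icc_sub ht, ← Finset.sum_neg_distrib]
          simp only [neg_sub]
  have hV1 : V 1 = γ * ⟪x 1 - xs, P (x 1 - xs)⟫ + ‖l‖ ^ 2 := by
    simp [V, almLyapunov, hlam1]
  have hVnonneg : 0 ≤ V (t + 1) :=
    add_nonneg (mul_nonneg hγ ((by positivity : 0 ≤ Lf * ‖x (t + 1) - xs‖ ^ 2).trans (hPLf _)))
      (sq_nonneg _)
  have hjensen :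
      (t : ℝ) * (f xt + g xt) ≤ ∑ k ∈ Finset.Icc 1 t, (f (x (k + 1)) + g (x (k + 1))) := by
    have := (hf.add hg).card_mul_map_average_le (Finset.nonempty_Icc.2 ht) (fun k ↦ x (k + 1))
    rwa [hcard, ← hxt] at this
  have hresidual : ∑ k ∈ Finset.Icc 1 t, (A (x (k + 1)) - b) = (t : ℝ) • (A xt - b) := by
    have ht0 : (t : ℝ) ≠ 0 := by positivity
    rw [Finset.sum_sub_distrib, ← map_sum, Finset.sum_const, hcard, hxt, map_smul, smul_sub,
      smul_inv_smul₀ ht0, Nat.cast_smul_eq_nsmul]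
  have hlinear : ∑ k ∈ Finset.Icc 1 t, ⟪l, A (x (k + 1)) - b⟫ = t * ⟪l, A xt - b⟫ := by
    rw [← inner_sum, hresidual, real_inner_smul_right]
  rw [← Finset.mul_sum, Finset.sum_sub_distrib, Finset.sum_sub_distrib, Finset.sum_const, hcard,
    nsmul_eq_mul, hlinear] at hsum
  linarith [mul_le_mul_of_nonneg_left hjensen (by positivity : (0 : ℝ) ≤ 2 * γ)]

theorem inner_le_sub_of_kkt (hf : ConvexOn ℝ Set.univ f) (hgrad : ∀ z, HasGradientAt f (f' z) z)
    {xs : E} {ls : H} (hfeas : A xs = b) (hkkt : HasSubgradientAt g (A.adjoint ls - f' xs) xs)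
    (z : E) : ⟪ls, A z - b⟫ ≤ f z + g z - (f xs + g xs) := by
  have hconv := hf.add_inner_le_of_hasGradientAt (hgrad xs) z
  have hsub := hkkt z
  rw [inner_sub_left, ContinuousLinearMap.adjoint_inner_left, map_sub, hfeas] at hsub
  linarith

end LinearizedALM

theorem stmt_6_general {E H : Type*}
    [NormedAddCommGroup E] [InnerProductSpace ℝ E] [FiniteDimensional ℝ E]
    [NormedAddCommGroup H] [InnerProductSpace ℝ H] [FiniteDimensional ℝ H]
    (A : E →L[ℝ] H) (b : H)
    (f : E → ℝ) (f' : E → E) (Lf : ℝ) (hLf : 0 ≤ Lf)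
    (hfconv : ConvexOn ℝ Set.univ f)
    (hgrad : ∀ x : E, HasGradientAt f (f' x) x)
    (hlip : ∀ x x' : E, ‖f' x - f' x'‖ ≤ Lf * ‖x - x'‖)
    (g : E → ℝ) (hgconv : ConvexOn ℝ Set.univ g)
    (β γ : ℝ) (hγ0 : 0 < γ) (hγ2 : γ < 2 * β)
    (P : E →L[ℝ] E) (hP : IsSelfAdjoint P)
    (hPpd : ∀ v : E, v ≠ 0 → Lf * ‖v‖ ^ 2 < ⟪v, P v⟫)
    (x : ℕ → E) (lam : ℕ → H)
    (hlam1 : lam 1 = 0)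
    (hopt : ∀ k : ℕ, 1 ≤ k → ∃ u : E,
      (∀ x' : E, g x' ≥ g (x (k+1)) + ⟪u, x' - x (k+1)⟫) ∧
      f' (x k) + u - (ContinuousLinearMap.adjoint A) (lam k)
        + β • (ContinuousLinearMap.adjoint A) (A (x (k+1)) - b)
        + P (x (k+1) - x k) = 0)
    (hlam : ∀ k : ℕ, 1 ≤ k → lam (k+1) = lam k - γ • (A (x (k+1)) - b))
    (xs : E) (ls : H)
    (hfeas : A xs = b) (hls : ls ≠ 0)
    (hkkt : ∀ x' : E, g x' ≥ g xs + ⟪(ContinuousLinearMap.adjoint A) ls - f' xs, x' - xs⟫) :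
    ∀ t : ℕ, 1 ≤ t → ∀ xt : E,
      xt = (t : ℝ)⁻¹ • ∑ k ∈ Finset.Icc 1 t, x (k+1) →
      |(f xt + g xt) - (f xs + g xs)|
          ≤ (1 / (t : ℝ)) * ((1 / 2) * ⟪x 1 - xs, P (x 1 - xs)⟫ + 2 * ‖ls‖ ^ 2 / γ) ∧
      ‖A xt - b‖
          ≤ (1 / ((t : ℝ) * ‖ls‖)) * ((1 / 2) * ⟪x 1 - xs, P (x 1 - xs)⟫ + 2 * ‖ls‖ ^ 2 / γ) := by
  intro t ht xt hxt
  have hPLf (v : E) : Lf * ‖v‖ ^ 2 ≤ ⟪v, P v⟫ := by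
    rcases eq_or_ne v 0 with rfl | hv
    · simp
    · exact (hPpd v hv).le
  obtain ⟨l, hl, hlr⟩ :=
    exists_norm_le_inner_eq_neg_mul_norm (by positivity : 0 ≤ 2 * ‖ls‖) (A xt - b)
  have hgap := two_mul_ergodic_lagrangian_gap_le hfconv hgrad hlip hgconv hLf hγ0.le hγ2.le hP
    hPLf hlam1 hopt hlam hfeas ht hxt l
  have hl2 : ‖l‖ ^ 2 ≤ (2 * ‖ls‖) ^ 2 := pow_le_pow_left₀ (norm_nonneg _) hl 2
  have hlow : -(‖ls‖ * ‖A xt - b‖) ≤ f xt + g xt - (f xs + g xs) :=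
    (neg_le_of_abs_le (abs_real_inner_le_norm ls _)).trans
      (inner_le_sub_of_kkt hfconv hgrad hfeas hkkt xt)
  refine abs_le_and_le_of_gap_bounds (norm_nonneg _) (norm_pos_iff.2 hls) (by positivity) hlow ?_
  refine le_of_mul_le_mul_left ?_ (by positivity : (0 : ℝ) < 2 * γ)
  rw [hlr] at hgap
  field_simp
  linarith

/-- O(1/t) ergodic rate of the linearized ALM with constant parameters. -/
theorem stmt_6 {E H : Type*}
    [NormedAddCommGroup E] [InnerProductSpace ℝ E] [FiniteDimensional ℝ E]
    [NormedAddCommGroup H] [InnerProductSpace ℝ H] [FiniteDimensional ℝ H]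
    (A : E →L[ℝ] H) (b : H)
    (f : E → ℝ) (f' : E → E) (Lf : ℝ) (hLf : 0 ≤ Lf)
    (hfconv : ConvexOn ℝ Set.univ f)
    (hgrad : ∀ x : E, HasGradientAt f (f' x) x)
    (hlip : ∀ x x' : E, ‖f' x - f' x'‖ ≤ Lf * ‖x - x'‖)
    (g : E → ℝ) (hgconv : ConvexOn ℝ Set.univ g)
    (β γ : ℝ) (hβ : 0 < β) (hγ0 : 0 < γ) (hγ2 : γ < 2 * β)
    (P : E →L[ℝ] E) (hP : IsSelfAdjoint P)
    (hPpd : ∀ v : E, v ≠ 0 → Lf * ‖v‖ ^ 2 < ⟪v, P v⟫)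
    (x : ℕ → E) (lam : ℕ → H)
    (hlam1 : lam 1 = 0)
    (hopt : ∀ k : ℕ, 1 ≤ k → ∃ u : E,
      (∀ x' : E, g x' ≥ g (x (k+1)) + ⟪u, x' - x (k+1)⟫) ∧
      f' (x k) + u - (ContinuousLinearMap.adjoint A) (lam k)
        + β • (ContinuousLinearMap.adjoint A) (A (x (k+1)) - b)
        + P (x (k+1) - x k) = 0)
    (hlam : ∀ k : ℕ, 1 ≤ k → lam (k+1) = lam k - γ • (A (x (k+1)) - b))
    (xs : E) (ls : H)
    (hfeas : A xs = b) (hls : ls ≠ 0)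
    (hkkt : ∀ x' : E, g x' ≥ g xs + ⟪(ContinuousLinearMap.adjoint A) ls - f' xs, x' - xs⟫) :
    ∀ t : ℕ, 1 ≤ t → ∀ xt : E,
      xt = (t : ℝ)⁻¹ • ∑ k ∈ Finset.Icc 1 t, x (k+1) →
      |(f xt + g xt) - (f xs + g xs)|
          ≤ (1 / (t : ℝ)) * ((1 / 2) * ⟪x 1 - xs, P (x 1 - xs)⟫ + 2 * ‖ls‖ ^ 2 / γ) ∧
      ‖A xt - b‖
          ≤ (1 / ((t : ℝ) * ‖ls‖)) * ((1 / 2) * ⟪x 1 - xs, P (x 1 - xs)⟫ + 2 * ‖ls‖ ^ 2 / γ) :=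
  stmt_6_general A b f f' Lf hLf hfconv hgrad hlip g hgconv β γ hγ0 hγ2 P hP hPpd x lam hlam1 hopt
    hlam xs ls hfeas hls hkkt
end

section
/- (One-iteration result for linearized ADMM.) Let β ≥ 0, γ > 0, and let P (on Y) and Q (on Z) be self-adjoint operators. Given yᵏ ∈ Y, zᵏ ∈ Z, λᵏ ∈ H, suppose: there is a subgradient u of f at y^{k+1} with u − B*λᵏ + β B*(B y^{k+1} + C zᵏ − b) + P(y^{k+1} − yᵏ) = 0; there is a subgradient v of g at z^{k+1} with v + ∇h(zᵏ) − C*λᵏ + β C*(B y^{k+1} + C z^{k+1} − b) + Q(z^{k+1} − zᵏ) = 0; and λ^{k+1} = λᵏ − γ(B y^{k+1} + C z^{k+1} − b). Then for every (y, z, λ) with B y + C z = b: F(y^{k+1}, z^{k+1}) − F(y, z) − ⟨λ, B y^{k+1} + C z^{k+1} − b⟩ ≤ −⟨(1/γ)(λᵏ − λ^{k+1}), λ − λᵏ + (β/γ)(λᵏ − λ^{k+1})⟩ + β⟨(1/γ)(λᵏ − λ^{k+1}) − C(z^{k+1} − z), C(z^{k+1} − zᵏ)⟩ + (L_h/2)‖z^{k+1}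 − zᵏ‖² − (μ_h/2)‖zᵏ − z‖² − (μ_g/2)‖z^{k+1} − z‖² − ⟨y^{k+1} − y, P(y^{k+1} − yᵏ)⟩ − ⟨z^{k+1} − z, Q(z^{k+1} − zᵏ)⟩. -/
/-!
The optimality conditions write the subgradients of `f` at `yᵏ⁺¹` and of `g` at `zᵏ⁺¹` through
`B*`, `C*` and the multiplier. Bound `f yᵏ⁺¹ - f y` by the subgradient inequality, `g zᵏ⁺¹ - g z`
by its strongly convex version, and `h zᵏ⁺¹ - h z` by the descent lemma at `zᵏ` combined with
strong convexity of `h` at `zᵏ`. Since `(1/γ)(λᵏ - λᵏ⁺¹)` is the residual `r = B yᵏ⁺¹ + C zᵏ⁺¹ - b`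
and `B (yᵏ⁺¹ - y) = r - C (zᵏ⁺¹ - z)`, the sum of the three bounds equals the right-hand side by an
inner-product identity.
-/

open scoped RealInnerProductSpace
open Set Filter Topology

section Convexity

variable {E : Type*} [NormedAddCommGroup E] [InnerProductSpace ℝ E] {f : E → ℝ} {m : ℝ}

lemma StrongConvexOn.add_le_sub_of_tendsto (hf : StrongConvexOn univ m f) (x y : E)
    {σ : ℝ → ℝ} {a : ℝ} (hσ : Tendsto σ (𝓝[>] 0) (𝓝 a))
    (hle : ∀ t ∈ Ioo (0 : ℝ) 1, σ t ≤ slope (fun s => f (x + s • (y - x))) 0 t) :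
    a + m / 2 * ‖y - x‖ ^ 2 ≤ f y - f x := by
  set c := m / 2 * ‖y - x‖ ^ 2
  have hlim : Tendsto (fun t => σ t + (1 - t) * c) (𝓝[>] 0) (𝓝 (a + c)) := by
    have : Tendsto (fun t : ℝ => (1 - t) * c) (𝓝[>] 0) (𝓝 ((1 - 0) * c)) :=
      ((continuous_const.sub continuous_id).mul continuous_const).continuousAt.tendsto.mono_left
        nhdsWithin_le_nhds
    simpa using hσ.add this
  refine le_of_tendsto hlim ?_
  filter_upwards [Ioo_mem_nhdsGT one_pos] with t ht
  have hline : (1 - t) • x + t • y = x + t • (y - x) := by module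
  have hconv : f (x + t • (y - x)) ≤ (1 - t) * f x + t * f y - (1 - t) * t * c := by
    have := hf.2 (mem_univ x) (mem_univ y) (sub_nonneg.2 ht.2.le) ht.1.le (sub_add_cancel 1 t)
    rwa [hline, norm_sub_rev] at this
  have hslope : slope (fun s => f (x + s • (y - x))) 0 t + (1 - t) * c ≤ f y - f x := by
    rw [slope_def_field, zero_smul, add_zero, sub_zero, div_add' _ _ _ ht.1.ne', div_le_iff₀ ht.1]
    linarith
  linarith [hle t ht]

lemma StrongConvexOn.add_inner_add_le_of_subgradient (hf : StrongConvexOn univ m f) {x v : E}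
    (hv : ∀ z, f z ≥ f x + ⟪v, z - x⟫) (y : E) :
    f x + ⟪v, y - x⟫ + m / 2 * ‖y - x‖ ^ 2 ≤ f y := by
  have := hf.add_le_sub_of_tendsto x y tendsto_const_nhds fun t ht => by
    have hvt := hv (x + t • (y - x))
    rw [add_sub_cancel_left, inner_smul_right] at hvt
    rw [slope_def_field, zero_smul, add_zero, sub_zero, le_div_iff₀ ht.1]
    linarith
  linarith

lemma HasGradientAt.hasDerivAt_comp_add_smul [CompleteSpace E] {x d v : E} {t : ℝ}
    (hf : HasGradientAt f v (x + t • d)) : HasDerivAt (fun s : ℝ => f (x + s • d)) ⟪v, d⟫ t := by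
  have hline : HasDerivAt (fun s : ℝ => x + s • d) d t := by
    simpa using ((hasDerivAt_id t).smul_const d).const_add x
  have := (hasGradientAt_iff_hasFDerivAt.mp hf).comp_hasDerivAt t hline
  simp only [InnerProductSpace.toDual_apply_apply] at this
  exact this

lemma StrongConvexOn.add_inner_add_le_of_hasGradientAt [CompleteSpace E]
    (hf : StrongConvexOn univ m f) {x v : E} (hx : HasGradientAt f v x) (y : E) :
    f x + ⟪v, y - x⟫ + m / 2 * ‖y - x‖ ^ 2 ≤ f y := by
  have hderiv : HasDerivAt (fun s : ℝ => f (x + s • (y - x))) ⟪v, y - x⟫ 0 :=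
    HasGradientAt.hasDerivAt_comp_add_smul (by simpa using hx)
  have := hf.add_le_sub_of_tendsto x y
    (hderiv.tendsto_slope.mono_left (nhdsGT_le_nhdsNE 0)) fun _ _ => le_rfl
  linarith

lemma le_add_inner_add_of_lipschitz_gradient [CompleteSpace E] {f' : E → E} {L : ℝ}
    (hgrad : ∀ z, HasGradientAt f (f' z) z) (hlip : ∀ z z', ‖f' z - f' z'‖ ≤ L * ‖z - z'‖)
    (x d : E) : f (x + d) ≤ f x + ⟪f' x, d⟫ + L / 2 * ‖d‖ ^ 2 := by
  have hderiv (t : ℝ) : HasDerivAt (fun s : ℝ => f (x + s • d)) ⟪f' (x + t • d), d⟫ t :=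
    (hgrad _).hasDerivAt_comp_add_smul
  have hbound (t : ℝ) : HasDerivAt (fun s : ℝ => f x + s * ⟪f' x, d⟫ + L / 2 * s ^ 2 * ‖d‖ ^ 2)
      (⟪f' x, d⟫ + L * t * ‖d‖ ^ 2) t := by
    refine ((((hasDerivAt_id t).mul_const ⟪f' x, d⟫).const_add (f x)).add
      (((hasDerivAt_pow 2 t).const_mul (L / 2)).mul_const (‖d‖ ^ 2))).congr_deriv ?_
    simp only [Nat.cast_ofNat, pow_one, one_mul, Nat.add_one_sub_one]; ring
  have := image_le_of_deriv_right_le_deriv_boundary (a := 0) (b := 1)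
    (fun t _ => (hderiv t).continuousAt.continuousWithinAt)
    (fun t _ => (hderiv t).hasDerivWithinAt) (by simp)
    (fun t _ => (hbound t).continuousAt.continuousWithinAt)
    (fun t _ => (hbound t).hasDerivWithinAt) (fun t ht => ?_) (right_mem_Icc.2 zero_le_one)
  · simpa using this
  calc ⟪f' (x + t • d), d⟫ = ⟪f' x, d⟫ + ⟪f' (x + t • d) - f' x, d⟫ := by
        rw [inner_sub_left]; ring
    _ ≤ ⟪f' x, d⟫ + L * ‖t • d‖ * ‖d‖ := by
        gcongr
        exact (real_inner_le_norm _ _).trans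
          (mul_le_mul_of_nonneg_right (by simpa using hlip (x + t • d) x) (norm_nonneg d))
    _ = ⟪f' x, d⟫ + L * t * ‖d‖ ^ 2 := by
        rw [norm_smul, Real.norm_of_nonneg ht.1]; ring

lemma StrongConvexOn.le_add_inner_of_lipschitz_gradient [CompleteSpace E] {f' : E → E} {L : ℝ}
    (hf : StrongConvexOn univ m f) (hgrad : ∀ z, HasGradientAt f (f' z) z)
    (hlip : ∀ z z', ‖f' z - f' z'‖ ≤ L * ‖z - z'‖) (x x' z : E) :
    f x' ≤ f z + ⟪f' x, x' - z⟫ + L / 2 * ‖x' - x‖ ^ 2 - m / 2 * ‖x - z‖ ^ 2 := by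
  have hdescent := le_add_inner_add_of_lipschitz_gradient hgrad hlip x (x' - x)
  have hlower := hf.add_inner_add_le_of_hasGradientAt (hgrad x) z
  rw [add_sub_cancel] at hdescent
  have hsplit : ⟪f' x, x' - z⟫ = ⟪f' x, x' - x⟫ - ⟪f' x, z - x⟫ := by
    rw [← inner_sub_right, sub_sub_sub_cancel_right]
  rw [hsplit, norm_sub_rev x z]
  linarith

end Convexity

lemma inner_eq_of_sub_adjoint_add_smul_adjoint_add_eq_zero {E F : Type*}
    [NormedAddCommGroup E] [InnerProductSpace ℝ E] [CompleteSpace E]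
    [NormedAddCommGroup F] [InnerProductSpace ℝ F] [CompleteSpace F]
    (A : E →L[ℝ] F) {u p : E} {a c : F} {β : ℝ}
    (h : u - ContinuousLinearMap.adjoint A a + β • ContinuousLinearMap.adjoint A c + p = 0)
    (w : E) : ⟪u, w⟫ = ⟪a - β • c, A w⟫ - ⟪p, w⟫ := by
  have hu : u = ContinuousLinearMap.adjoint A (a - β • c) - p := by
    rw [map_sub, map_smul, ← sub_eq_zero, ← h]; abel
  rw [hu, inner_sub_left, ContinuousLinearMap.adjoint_inner_left]

lemma admm_inner_identity {H : Type*} [NormedAddCommGroup H] [InnerProductSpace ℝ H]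
    (β : ℝ) (lam lamk r c c' : H) :
    ⟪lamk - β • (r - c'), r - c⟫ + ⟪lamk - β • r, c⟫ - ⟪lam, r⟫
      = -⟪r, lam - lamk + β • r⟫ + β * ⟪r - c, c'⟫ := by
  simp only [inner_sub_left, inner_sub_right, inner_add_right, inner_smul_left,
    inner_smul_right, RCLike.conj_to_real]
  linear_combination real_inner_comm lam r - real_inner_comm lamk r
    + β * real_inner_comm c' c - β * real_inner_comm c' r

theorem stmt_10_general {Y Z H : Type*}
    [NormedAddCommGroup Y] [InnerProductSpace ℝ Y] [FiniteDimensional ℝ Y]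
    [NormedAddCommGroup Z] [InnerProductSpace ℝ Z] [FiniteDimensional ℝ Z]
    [NormedAddCommGroup H] [InnerProductSpace ℝ H] [FiniteDimensional ℝ H]
    (B : Y →L[ℝ] H) (C : Z →L[ℝ] H) (b : H)
    (f : Y → ℝ)
    (g : Z → ℝ) (μg : ℝ)
    (hg : ConvexOn ℝ Set.univ (fun z => g z - μg / 2 * ‖z‖ ^ 2))
    (h : Z → ℝ) (h' : Z → Z) (Lh μh : ℝ)
    (hh : ConvexOn ℝ Set.univ (fun z => h z - μh / 2 * ‖z‖ ^ 2))
    (hgrad : ∀ z : Z, HasGradientAt h (h' z) z)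
    (hlip : ∀ z z' : Z, ‖h' z - h' z'‖ ≤ Lh * ‖z - z'‖)
    (β γ : ℝ) (hγ : 0 < γ)
    (P : Y →L[ℝ] Y)
    (Q : Z →L[ℝ] Z)
    (yk : Y) (zk : Z) (lamk : H) (yk1 : Y) (zk1 : Z) (lamk1 : H)
    (hopty : ∃ u : Y,
      (∀ y' : Y, f y' ≥ f yk1 + ⟪u, y' - yk1⟫) ∧
      u - (ContinuousLinearMap.adjoint B) lamk
        + β • (ContinuousLinearMap.adjoint B) (B yk1 + C zk - b)
        + P (yk1 - yk) = 0)
    (hoptz : ∃ v : Z,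
      (∀ z' : Z, g z' ≥ g zk1 + ⟪v, z' - zk1⟫) ∧
      v + h' zk - (ContinuousLinearMap.adjoint C) lamk
        + β • (ContinuousLinearMap.adjoint C) (B yk1 + C zk1 - b)
        + Q (zk1 - zk) = 0)
    (hlam : lamk1 = lamk - γ • (B yk1 + C zk1 - b)) :
    ∀ (y : Y) (z : Z), B y + C z = b → ∀ lam : H,
      (f yk1 + g zk1 + h zk1) - (f y + g z + h z) - ⟪lam, B yk1 + C zk1 - b⟫
        ≤ -⟪(1 / γ) • (lamk - lamk1), lam - lamk + (β / γ) • (lamk - lamk1)⟫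
          + β * ⟪(1 / γ) • (lamk - lamk1) - C (zk1 - z), C (zk1 - zk)⟫
          + Lh / 2 * ‖zk1 - zk‖ ^ 2 - μh / 2 * ‖zk - z‖ ^ 2 - μg / 2 * ‖zk1 - z‖ ^ 2
          - ⟪yk1 - y, P (yk1 - yk)⟫ - ⟪zk1 - z, Q (zk1 - zk)⟫ := by
  intro y z hyz lam
  obtain ⟨u, hu, hu_opt⟩ := hopty
  obtain ⟨v, hv, hv_opt⟩ := hoptz
  set r := B yk1 + C zk1 - b
  have hstep : lamk - lamk1 = γ • r := by rw [hlam, sub_sub_cancel]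
  rw [hstep, smul_smul, smul_smul, one_div_mul_cancel hγ.ne', div_mul_cancel₀ β hγ.ne', one_smul]
  have hf_le : f yk1 - f y
      ≤ ⟪lamk - β • (B yk1 + C zk - b), B (yk1 - y)⟫ - ⟪P (yk1 - yk), yk1 - y⟫ := by
    have := hu y
    rw [← neg_sub yk1 y, inner_neg_right,
      inner_eq_of_sub_adjoint_add_smul_adjoint_add_eq_zero B hu_opt] at this
    linarith
  have hg_le : g zk1 - g z ≤ ⟪lamk - β • r, C (zk1 - z)⟫ - ⟪h' zk, zk1 - z⟫
      - ⟪Q (zk1 - zk), zk1 - z⟫ - μg / 2 * ‖zk1 - z‖ ^ 2 := by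
    have := (strongConvexOn_iff_convex.2 hg).add_inner_add_le_of_subgradient hv z
    have hv_inner := inner_eq_of_sub_adjoint_add_smul_adjoint_add_eq_zero C hv_opt (zk1 - z)
    rw [inner_add_left] at hv_inner
    rw [← neg_sub zk1 z, inner_neg_right, norm_neg] at this
    linarith
  have hh_le :=
    (strongConvexOn_iff_convex.2 hh).le_add_inner_of_lipschitz_gradient hgrad hlip zk zk1 z
  have hBy : B (yk1 - y) = r - C (zk1 - z) := by simp only [r, map_sub, ← hyz]; abel
  have hr_zk : B yk1 + C zk - b = r - C (zk1 - zk) := by simp only [r, map_sub]; abel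
  rw [hBy, hr_zk] at hf_le
  have key := admm_inner_identity β lam lamk r (C (zk1 - z)) (C (zk1 - zk))
  linarith [real_inner_comm (yk1 - y) (P (yk1 - yk)), real_inner_comm (zk1 - z) (Q (zk1 - zk))]

/-- One-iteration result for the linearized ADMM (Lemma 2.9 in the paper). -/
theorem stmt_10 {Y Z H : Type*}
    [NormedAddCommGroup Y] [InnerProductSpace ℝ Y] [FiniteDimensional ℝ Y]
    [NormedAddCommGroup Z] [InnerProductSpace ℝ Z] [FiniteDimensional ℝ Z]
    [NormedAddCommGroup H] [InnerProductSpace ℝ H] [FiniteDimensional ℝ H]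
    (B : Y →L[ℝ] H) (C : Z →L[ℝ] H) (b : H)
    (f : Y → ℝ) (hf : ConvexOn ℝ Set.univ f)
    (g : Z → ℝ) (μg : ℝ) (hμg : 0 ≤ μg)
    (hg : ConvexOn ℝ Set.univ (fun z => g z - μg / 2 * ‖z‖ ^ 2))
    (h : Z → ℝ) (h' : Z → Z) (Lh μh : ℝ) (hLh : 0 ≤ Lh) (hμh : 0 ≤ μh)
    (hh : ConvexOn ℝ Set.univ (fun z => h z - μh / 2 * ‖z‖ ^ 2))
    (hgrad : ∀ z : Z, HasGradientAt h (h' z) z)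
    (hlip : ∀ z z' : Z, ‖h' z - h' z'‖ ≤ Lh * ‖z - z'‖)
    (hμ : 0 < μg + μh)
    (β γ : ℝ) (hβ : 0 ≤ β) (hγ : 0 < γ)
    (P : Y →L[ℝ] Y) (hP : IsSelfAdjoint P)
    (Q : Z →L[ℝ] Z) (hQ : IsSelfAdjoint Q)
    (yk : Y) (zk : Z) (lamk : H) (yk1 : Y) (zk1 : Z) (lamk1 : H)
    (hopty : ∃ u : Y,
      (∀ y' : Y, f y' ≥ f yk1 + ⟪u, y' - yk1⟫) ∧
      u - (ContinuousLinearMap.adjoint B) lamk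
        + β • (ContinuousLinearMap.adjoint B) (B yk1 + C zk - b)
        + P (yk1 - yk) = 0)
    (hoptz : ∃ v : Z,
      (∀ z' : Z, g z' ≥ g zk1 + ⟪v, z' - zk1⟫) ∧
      v + h' zk - (ContinuousLinearMap.adjoint C) lamk
        + β • (ContinuousLinearMap.adjoint C) (B yk1 + C zk1 - b)
        + Q (zk1 - zk) = 0)
    (hlam : lamk1 = lamk - γ • (B yk1 + C zk1 - b)) :
    ∀ (y : Y) (z : Z), B y + C z = b → ∀ lam : H,
      (f yk1 + g zk1 + h zk1) - (f y + g z + h z) - ⟪lam, B yk1 + C zk1 - b⟫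
        ≤ -⟪(1 / γ) • (lamk - lamk1), lam - lamk + (β / γ) • (lamk - lamk1)⟫
          + β * ⟪(1 / γ) • (lamk - lamk1) - C (zk1 - z), C (zk1 - zk)⟫
          + Lh / 2 * ‖zk1 - zk‖ ^ 2 - μh / 2 * ‖zk - z‖ ^ 2 - μg / 2 * ‖zk1 - z‖ ^ 2
          - ⟪yk1 - y, P (yk1 - yk)⟫ - ⟪zk1 - z, Q (zk1 - zk)⟫ :=
  stmt_10_general B C b f g μg hg h h' Lh μh hh hgrad hlip β γ hγ P Q yk zk lamk yk1 zk1 lamk1 hopty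
    hoptz hlam
end
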